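/- arXiv:2603.26228 — 2 statements merged into one kernel-verified Lean document; each statement's English description precedes it below -/
import Mathlib

section
/- Let C ⊂ ℝ^d be a cone and suppose 𝟏 = e₁+⋯+e_d satisfies: there exists δ* > 0 such that for every x in the box [(1-δ*)𝟏, (1+δ*)𝟏], x + C ⊆ C. Then for every δ > 0 and every t ≥ δ/δ*, whenever the box [x, x+δ𝟏] intersects C, the whole box [x, x+δ𝟏] is contained in -t𝟏 + C. -/
/-- If the cone `C` is stable under translation by every vector in the box
`[(1-δ*)𝟏, (1+δ*)𝟏]` (and under positive scaling), then for every `δ > 0` and every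
`t ≥ δ/δ*`, any box `[x, x+δ𝟏]` that intersects `C` is entirely contained in `-t𝟏 + C`,
i.e. `w + t𝟏 ∈ C` for every `w` in the box. -/
theorem stmt0 (d : ℕ) (C : Set (Fin d → ℝ))
    (hcone : ∀ c ∈ C, ∀ s : ℝ, 0 < s → s • c ∈ C)
    (δs : ℝ) (hδs : 0 < δs)
    (hshift : ∀ u ∈ Set.Icc ((1 - δs) • (1 : Fin d → ℝ)) ((1 + δs) • (1 : Fin d → ℝ)),
      ∀ c ∈ C, u + c ∈ C)
    (δ t : ℝ) (hδ : 0 < δ) (ht : δ / δs ≤ t)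
    (x : Fin d → ℝ) (hx : (Set.Icc x (x + δ • (1 : Fin d → ℝ)) ∩ C).Nonempty) :
    ∀ w ∈ Set.Icc x (x + δ • (1 : Fin d → ℝ)), w + t • (1 : Fin d → ℝ) ∈ C := by
  obtain ⟨y, ⟨hy1, hy2⟩, hyC⟩ := hx
  intro w ⟨hw1, hw2⟩
  have htpos : 0 < t := lt_of_lt_of_le (div_pos hδ hδs) ht
  have hδt : δ ≤ t * δs := (div_le_iff₀ hδs).mp ht
  have hc : t⁻¹ • y ∈ C := hcone y hyC _ (inv_pos.mpr htpos)
  have hu : t⁻¹ • (w - y + t • (1 : Fin d → ℝ)) ∈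
      Set.Icc ((1 - δs) • (1 : Fin d → ℝ)) ((1 + δs) • (1 : Fin d → ℝ)) := by
    constructor <;> intro i <;>
      simp only [Pi.smul_apply, Pi.add_apply, Pi.sub_apply, Pi.one_apply, smul_eq_mul,
        mul_one] <;>
    · have h1 := hw1 i
      have h2 := hw2 i
      have h3 := hy1 i
      have h4 := hy2 i
      simp only [Pi.add_apply, Pi.smul_apply, Pi.one_apply, smul_eq_mul, mul_one] at h2 h4
      have hinv : t * t⁻¹ = 1 := mul_inv_cancel₀ htpos.ne'
      have hip : (0:ℝ) < t⁻¹ := inv_pos.mpr htpos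
      nlinarith [mul_le_mul_of_nonneg_left (by nlinarith : t * (1 - δs) ≤ w i - y i + t) hip.le,
        mul_le_mul_of_nonneg_left (by nlinarith : w i - y i + t ≤ t * (1 + δs)) hip.le]
  have hmem := hshift _ hu _ hc
  have := hcone _ hmem t htpos
  rwa [show t • (t⁻¹ • (w - y + t • (1 : Fin d → ℝ)) + t⁻¹ • y) = w + t • (1 : Fin d → ℝ)
    from by rw [smul_add, smul_smul, smul_smul, mul_inv_cancel₀ htpos.ne', one_smul, one_smul]
            abel] at this
end

section
/- Time-reversal lower bound for exit probabilities: with the notation of the previous setting, for δ̃ > δ > 0, x ∈ C, and y ∈ C_δ̃ (the reduced cone t_δ̃𝟏 + C), letting τ̃_δ̃(y) = inf{n≥1 : y−S(n) ∉ C_δ̃}: ℙ(τ̃_δ̃(y) > n, y−S(n) ∈ [x−(δ̃−δ)𝟏, x]) ≤ ℙ(τ(x) > n, x+S(n) ∈ [y, y+δ̃𝟏]). -/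
open MeasureTheory ProbabilityTheory

/-- Joint law of finitely many of the (reindexed) independent variables is the
product of the marginals. -/
lemma joint_map_eq_pi {Ω : Type*} [MeasurableSpace Ω] (P : Measure Ω) [IsProbabilityMeasure P]
    {d n : ℕ} (X : ℕ → Ω → (Fin d → ℝ)) (hmeas : ∀ i, Measurable (X i))
    (hindep : iIndepFun X P)
    (g : Fin n → ℕ) (r : ℕ → Fin n) (hrg : ∀ i, r (g i) = i) :
    Measure.map (fun ω (i : Fin n) => X (g i) ω) P
      = Measure.pi (fun i => Measure.map (X (g i)) P) := by
  haveI : ∀ i : Fin n, IsProbabilityMeasure (Measure.map (X (g i)) P) :=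
    fun i => Measure.isProbabilityMeasure_map (hmeas (g i)).aemeasurable
  have key : ∀ s : (i : Fin n) → Set (Fin d → ℝ), (∀ i, MeasurableSet (s i)) →
      (Measure.map (fun ω (i : Fin n) => X (g i) ω) P) (Set.pi Set.univ s)
        = ∏ i, (Measure.map (X (g i)) P) (s i) := by
    intro s hs
    have hF : Measurable (fun ω (i : Fin n) => X (g i) ω) :=
      measurable_pi_lambda _ (fun i => hmeas (g i))
    rw [Measure.map_apply hF (MeasurableSet.univ_pi hs)]
    have hset : (fun ω (i : Fin n) => X (g i) ω) ⁻¹' (Set.pi Set.univ s)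
        = ⋂ j ∈ Finset.image g Finset.univ, X j ⁻¹' s (r j) := by
      ext ω
      simp only [Set.mem_preimage, Set.mem_pi, Set.mem_univ, forall_true_left,
        Set.mem_iInter, Finset.mem_image, Finset.mem_univ, true_and, forall_exists_index]
      constructor
      · rintro h j i rfl
        rw [hrg]; exact h i
      · intro h i
        have := h (g i) i rfl
        rwa [hrg] at this
    rw [hset, hindep.meas_biInter (S := Finset.image g Finset.univ)
        (s := fun j => X j ⁻¹' s (r j)) ?_]
    · rw [Finset.prod_image (fun i _ j _ hij => by
        have : r (g i) = r (g j) := by rw [hij]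
        rwa [hrg, hrg] at this)]
      refine Finset.prod_congr rfl (fun i _ => ?_)
      rw [hrg, Measure.map_apply (hmeas (g i)) (hs i)]
    · intro j _
      exact ⟨s (r j), hs (r j), rfl⟩
  exact (Measure.pi_eq key).symm

/-- time-reversal lower bound for exit probabilities.  With the reduced cone
`C_δ̃ = t_δ̃ 𝟏 + C` and its reverse exit time `τ̃_δ̃(y)`, for `δ̃ > δ > 0`, `x ∈ C` and
`y ∈ C_δ̃`:
`ℙ(τ̃_δ̃(y) > n, y−S(n) ∈ [x−(δ̃−δ)𝟏, x]) ≤ ℙ(τ(x) > n, x+S(n) ∈ [y, y+δ̃𝟏])`. -/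
theorem stmt3 (d : ℕ) (Ω : Type*) [MeasurableSpace Ω]
    (P : Measure Ω) [IsProbabilityMeasure P]
    (X : ℕ → Ω → (Fin d → ℝ))
    (hmeas : ∀ i, Measurable (X i))
    (hindep : iIndepFun X P)
    (hident : ∀ i j, Measure.map (X i) P = Measure.map (X j) P)
    (S : ℕ → Ω → (Fin d → ℝ))
    (hS : ∀ n ω, S n ω = ∑ i ∈ Finset.range n, X (i + 1) ω)
    (C : Set (Fin d → ℝ))
    (hcone : ∀ c ∈ C, ∀ s : ℝ, 0 < s → s • c ∈ C)
    (δs : ℝ) (hδs : 0 < δs)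
    (hshift : ∀ u ∈ Set.Icc ((1 - δs) • (1 : Fin d → ℝ)) ((1 + δs) • (1 : Fin d → ℝ)),
      ∀ c ∈ C, u + c ∈ C)
    (δ δt : ℝ) (hδ : 0 < δ) (hδδt : δ < δt)
    (tδ : ℝ)
    (htδ : tδ = sInf {t : ℝ | 0 < t ∧ ∀ w : Fin d → ℝ,
        (Set.Icc w (w + δt • (1 : Fin d → ℝ)) ∩ C).Nonempty →
        ∀ v ∈ Set.Icc w (w + δt • (1 : Fin d → ℝ)), v + t • (1 : Fin d → ℝ) ∈ C})
    (Cpos : Set (Fin d → ℝ))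
    (hCpos : Cpos = {w | w - tδ • (1 : Fin d → ℝ) ∈ C})
    (x y : Fin d → ℝ) (hx : x ∈ C) (hy : y ∈ Cpos)
    (n : ℕ) :
    P {ω | (∀ k, 1 ≤ k → k ≤ n → y - S k ω ∈ Cpos) ∧
        y - S n ω ∈ Set.Icc (x - (δt - δ) • (1 : Fin d → ℝ)) x}
      ≤ P {ω | (∀ k, 1 ≤ k → k ≤ n → x + S k ω ∈ C) ∧
        x + S n ω ∈ Set.Icc y (y + δt • (1 : Fin d → ℝ))} := by
  have hδt : 0 < δt := hδ.trans hδδt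
  -- coordinates of `Icc` membership
  have hIcc : ∀ a b v : Fin d → ℝ, v ∈ Set.Icc a b ↔ ∀ i, a i ≤ v i ∧ v i ≤ b i := by
    intro a b v
    constructor
    · rintro ⟨h1, h2⟩ i; exact ⟨h1 i, h2 i⟩
    · intro h; exact ⟨fun i => (h i).1, fun i => (h i).2⟩
  -- the defining set for tδ
  set T : Set ℝ := {t : ℝ | 0 < t ∧ ∀ w : Fin d → ℝ,
      (Set.Icc w (w + δt • (1 : Fin d → ℝ)) ∩ C).Nonempty →
      ∀ v ∈ Set.Icc w (w + δt • (1 : Fin d → ℝ)), v + t • (1 : Fin d → ℝ) ∈ C} with hT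
  -- scaled shift: for any s > 0, shifts with coordinates in [s(1-δs), s(1+δs)] preserve C
  have hscale : ∀ s : ℝ, 0 < s → ∀ u : Fin d → ℝ,
      (∀ i, s * (1 - δs) ≤ u i ∧ u i ≤ s * (1 + δs)) → ∀ c ∈ C, u + c ∈ C := by
    intro s hs u hu c hc
    have h1 : s⁻¹ • u ∈ Set.Icc ((1 - δs) • (1 : Fin d → ℝ)) ((1 + δs) • (1 : Fin d → ℝ)) := by
      rw [hIcc]
      intro i
      have h0 := hu i
      have hsi : (s⁻¹ • u) i = s⁻¹ * u i := rfl
      have h1i : ((1 - δs) • (1 : Fin d → ℝ)) i = 1 - δs := by simp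
      have h2i : ((1 + δs) • (1 : Fin d → ℝ)) i = 1 + δs := by simp
      rw [hsi, h1i, h2i]
      constructor
      · rw [inv_mul_eq_div, le_div_iff₀ hs]; nlinarith [h0.1]
      · rw [inv_mul_eq_div, div_le_iff₀ hs]; nlinarith [h0.2]
    have h2 := hshift _ h1 _ (hcone c hc s⁻¹ (by positivity))
    have h3 := hcone _ h2 s hs
    rwa [smul_add, smul_inv_smul₀ (ne_of_gt hs), smul_inv_smul₀ (ne_of_gt hs)] at h3
  -- T is nonempty
  have hTne : δt / δs ∈ T := by
    refine ⟨by positivity, ?_⟩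
    rintro w ⟨p, hpbox, hpC⟩ v hvbox
    have hvb := (hIcc _ _ _).1 hvbox
    have hpb := (hIcc _ _ _).1 hpbox
    have key := hscale (δt / δs) (by positivity) (v + (δt / δs) • (1 : Fin d → ℝ) - p) ?_ p hpC
    · rwa [sub_add_cancel] at key
    · intro i
      have hv1 := hvb i
      have hp1 := hpb i
      have hw : (w + δt • (1 : Fin d → ℝ)) i = w i + δt := by simp
      rw [hw] at hv1 hp1
      have hvi : (v + (δt / δs) • (1 : Fin d → ℝ) - p) i = v i + δt / δs - p i := by simp
      have hcancel : δt / δs * δs = δt := div_mul_cancel₀ _ (ne_of_gt hδs)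
      rw [hvi]
      constructor
      · nlinarith
      · nlinarith
  have hTbdd : BddBelow T := ⟨0, fun t ht => le_of_lt ht.1⟩
  obtain ⟨t, htT, htlt⟩ : ∃ t ∈ T, t < tδ + δ := by
    refine exists_lt_of_csInf_lt ⟨_, hTne⟩ ?_
    rw [← htδ]
    linarith
  have htδle : tδ ≤ t := htδ ▸ csInf_le hTbdd htT
  -- the enlarged (closed) version of Cpos
  set Cc : Set (Fin d → ℝ) := {w | w - tδ • (1 : Fin d → ℝ) ∈ closure C} with hCc
  have hCposCc : Cpos ⊆ Cc := by
    intro w hw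
    rw [hCpos] at hw
    exact subset_closure hw
  -- KEY deterministic lemma
  have hkey : ∀ p : Fin d → ℝ, p ∈ Cc → ∀ u : Fin d → ℝ,
      (∀ i, 0 ≤ u i ∧ u i ≤ δt - δ) → p + u ∈ C := by
    intro p hp u hu
    set c : Fin d → ℝ := p - tδ • (1 : Fin d → ℝ) with hc
    -- the box [c - δ1, c - δ1 + δt1] meets C
    have hmeets : (Set.Icc (c - δ • (1 : Fin d → ℝ))
        ((c - δ • (1 : Fin d → ℝ)) + δt • (1 : Fin d → ℝ)) ∩ C).Nonempty := by
      have hcc : c ∈ closure C := hp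
      obtain ⟨b, hbC, hbd⟩ := Metric.mem_closure_iff.1 hcc (min δ (δt - δ))
        (lt_min hδ (by linarith))
      refine ⟨b, (hIcc _ _ _).2 fun i => ?_, hbC⟩
      have hdi : |c i - b i| < min δ (δt - δ) := by
        have := dist_le_pi_dist c b i
        rw [Real.dist_eq] at this
        exact lt_of_le_of_lt this hbd
      have h1 : |c i - b i| < δ := lt_of_lt_of_le hdi (min_le_left _ _)
      have h2 : |c i - b i| < δt - δ := lt_of_lt_of_le hdi (min_le_right _ _)
      rw [abs_lt] at h1 h2
      have e1 : (c - δ • (1 : Fin d → ℝ)) i = c i - δ := by simp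
      have e2 : ((c - δ • (1 : Fin d → ℝ)) + δt • (1 : Fin d → ℝ)) i = c i - δ + δt := by simp
      rw [e1, e2]
      constructor <;> linarith [h1.1, h1.2, h2.1, h2.2]
    have hv : p + u - t • (1 : Fin d → ℝ) ∈ Set.Icc (c - δ • (1 : Fin d → ℝ))
        ((c - δ • (1 : Fin d → ℝ)) + δt • (1 : Fin d → ℝ)) := by
      refine (hIcc _ _ _).2 fun i => ?_
      have e0 : (p + u - t • (1 : Fin d → ℝ)) i = p i + u i - t := by simp
      have e1 : (c - δ • (1 : Fin d → ℝ)) i = p i - tδ - δ := by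
        simp [hc]
      have e2 : ((c - δ • (1 : Fin d → ℝ)) + δt • (1 : Fin d → ℝ)) i
          = p i - tδ - δ + δt := by
        simp [hc]
      rw [e0, e1, e2]
      have := hu i
      constructor <;> linarith [this.1, this.2]
    have := htT.2 _ hmeets _ hv
    rwa [sub_add_cancel] at this
  -- partial sums of a finite vector
  set W : ℕ → (Fin n → (Fin d → ℝ)) → (Fin d → ℝ) :=
    fun k v => ∑ i ∈ Finset.range k, if h : i < n then v ⟨i, h⟩ else 0 with hW
  have hWmeas : ∀ k, Measurable (W k) := by
    intro k
    apply Finset.measurable_sum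
    intro i _
    by_cases h : i < n
    · simp only [dif_pos h]
      exact measurable_pi_apply _
    · simp only [dif_neg h]
      exact measurable_const
  -- the two coordinate maps
  set F1 : Ω → (Fin n → (Fin d → ℝ)) := fun ω i => X ((i : ℕ) + 1) ω with hF1
  set F2 : Ω → (Fin n → (Fin d → ℝ)) := fun ω i => X (n - (i : ℕ)) ω with hF2
  have hF1m : Measurable F1 := measurable_pi_lambda _ (fun i => hmeas _)
  have hF2m : Measurable F2 := measurable_pi_lambda _ (fun i => hmeas _)
  -- identification of partial sums
  have hWF1 : ∀ k, k ≤ n → ∀ ω, W k (F1 ω) = S k ω := by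
    intro k hk ω
    rw [hS]
    refine Finset.sum_congr rfl (fun i hi => ?_)
    have : i < n := lt_of_lt_of_le (Finset.mem_range.1 hi) hk
    simp only [dif_pos this]
    rfl
  have hWF2 : ∀ k, k ≤ n → ∀ ω, W k (F2 ω) = S n ω - S (n - k) ω := by
    intro k hk ω
    have h1 : W k (F2 ω) = ∑ i ∈ Finset.range k, X (n - i) ω := by
      refine Finset.sum_congr rfl (fun i hi => ?_)
      have : i < n := lt_of_lt_of_le (Finset.mem_range.1 hi) hk
      simp only [dif_pos this]
      rfl
    have h2 : ∑ i ∈ Finset.range k, X (n - i) ω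
        = ∑ j ∈ Finset.Ico (n - k) n, X (j + 1) ω := by
      refine Finset.sum_nbij' (fun i => n - 1 - i) (fun j => n - 1 - j) ?_ ?_ ?_ ?_ ?_
      · intro i hi
        have := Finset.mem_range.1 hi
        rw [Finset.mem_Ico]
        omega
      · intro j hj
        have := Finset.mem_Ico.1 hj
        rw [Finset.mem_range]
        omega
      · intro i hi
        have := Finset.mem_range.1 hi
        omega
      · intro j hj
        have := Finset.mem_Ico.1 hj
        omega
      · intro i hi
        have h5 := Finset.mem_range.1 hi
        have h6 : n - 1 - i + 1 = n - i := by omega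
        rw [h6]
    rw [h1, h2, Finset.sum_Ico_eq_sub _ (by omega), hS, hS]
  have hS0 : ∀ ω, S 0 ω = 0 := by
    intro ω; rw [hS]; simp
  -- the measurable event in path space
  set E : Set (Fin n → (Fin d → ℝ)) := {v | (∀ k, 1 ≤ k → k ≤ n → y - W k v ∈ Cc) ∧
      y - W n v ∈ Set.Icc (x - (δt - δ) • (1 : Fin d → ℝ)) x} with hE
  have hCcMeas : MeasurableSet Cc := by
    have : Cc = (fun w : Fin d → ℝ => w - tδ • (1 : Fin d → ℝ)) ⁻¹' closure C := rfl
    rw [this]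
    exact (isClosed_closure.measurableSet).preimage (measurable_id.sub measurable_const)
  have hEmeas : MeasurableSet E := by
    have hE2 : E = {v : Fin n → (Fin d → ℝ) | ∀ k, 1 ≤ k → k ≤ n → y - W k v ∈ Cc}
        ∩ {v : Fin n → (Fin d → ℝ) |
            y - W n v ∈ Set.Icc (x - (δt - δ) • (1 : Fin d → ℝ)) x} := rfl
    rw [hE2]
    refine MeasurableSet.inter ?_ ?_
    · have h3 : {v : Fin n → (Fin d → ℝ) | ∀ k, 1 ≤ k → k ≤ n → y - W k v ∈ Cc}
          = ⋂ k, ⋂ (_ : 1 ≤ k), ⋂ (_ : k ≤ n), (fun v => y - W k v) ⁻¹' Cc := by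
        ext v; simp
      rw [h3]
      exact MeasurableSet.iInter fun k => MeasurableSet.iInter fun _ =>
        MeasurableSet.iInter fun _ => hCcMeas.preimage (measurable_const.sub (hWmeas k))
    · refine MeasurableSet.preimage ?_ (measurable_const.sub (hWmeas n))
      rw [← Set.pi_univ_Icc]
      exact MeasurableSet.univ_pi fun i => measurableSet_Icc
  -- equality of the two laws
  have hlaw : Measure.map F1 P = Measure.map F2 P := by
    rcases Nat.eq_zero_or_pos n with hn | hn
    · have : F1 = F2 := by
        funext ω i
        exact absurd i.2 (by omega)
      rw [this]
    · have hr1 : ∀ i : Fin n, (⟨min i (n - 1), by omega⟩ : Fin n) = i := by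
        intro i
        have : min (i : ℕ) (n - 1) = i := by
          have := i.2; omega
        exact Fin.ext (by simp [this])
      rw [joint_map_eq_pi P X hmeas hindep (fun i => (i : ℕ) + 1)
            (fun j => ⟨min (j - 1) (n - 1), by omega⟩) (fun i => by
              have h2 := i.2
              exact Fin.ext (by simp; omega)),
          joint_map_eq_pi P X hmeas hindep (fun i => n - (i : ℕ))
            (fun j => ⟨min (n - j) (n - 1), by omega⟩) (fun i => by
              have h2 := i.2
              exact Fin.ext (by simp; omega))]
      exact congrArg Measure.pi (funext fun i => hident _ _)
  -- step 1: the LHS event is contained in F1 ⁻¹' E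
  have hsub1 : {ω | (∀ k, 1 ≤ k → k ≤ n → y - S k ω ∈ Cpos) ∧
      y - S n ω ∈ Set.Icc (x - (δt - δ) • (1 : Fin d → ℝ)) x} ⊆ F1 ⁻¹' E := by
    rintro ω ⟨h1, h2⟩
    refine ⟨fun k hk1 hk2 => ?_, ?_⟩
    · rw [hWF1 k hk2]
      exact hCposCc (h1 k hk1 hk2)
    · rw [hWF1 n le_rfl]
      exact h2
  -- step 2: F2 ⁻¹' E is contained in the RHS event
  have hsub2 : F2 ⁻¹' E ⊆ {ω | (∀ k, 1 ≤ k → k ≤ n → x + S k ω ∈ C) ∧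
      x + S n ω ∈ Set.Icc y (y + δt • (1 : Fin d → ℝ))} := by
    rintro ω ⟨h1, h2⟩
    rw [hWF2 n le_rfl, Nat.sub_self, hS0, sub_zero] at h2
    have hz := (hIcc _ _ _).1 h2
    -- u := x - (y - S n ω)
    have hu : ∀ i, 0 ≤ (x - (y - S n ω)) i ∧ (x - (y - S n ω)) i ≤ δt - δ := by
      intro i
      have h0 := hz i
      simp only [Pi.sub_apply, Pi.smul_apply, Pi.one_apply, smul_eq_mul, mul_one] at h0 ⊢
      constructor
      · linarith [h0.1, h0.2]
      · linarith [h0.1, h0.2]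
    constructor
    · intro k hk1 hk2
      have hp : (y - S n ω + S k ω) ∈ Cc := by
        rcases Nat.lt_or_ge k n with hkn | hkn
        · have hj := h1 (n - k) (by omega) (by omega)
          rw [hWF2 (n - k) (by omega)] at hj
          have : n - (n - k) = k := by omega
          rw [this] at hj
          have : y - (S n ω - S k ω) = y - S n ω + S k ω := by abel
          rwa [this] at hj
        · have hkn' : k = n := le_antisymm hk2 hkn
          rw [hkn']
          have hyy : y - S n ω + S n ω = y := by abel
          rw [hyy]
          exact hCposCc hy
      have := hkey _ hp _ hu
      have e : y - S n ω + S k ω + (x - (y - S n ω)) = x + S k ω := by abel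
      rwa [e] at this
    · refine (hIcc _ _ _).2 fun i => ?_
      have := hu i
      simp only [Pi.sub_apply] at this
      have e1 : (x + S n ω) i = x i + S n ω i := rfl
      have e2 : (y + δt • (1 : Fin d → ℝ)) i = y i + δt := by simp
      rw [e1, e2]
      constructor <;> linarith [this.1, this.2]
  calc P {ω | (∀ k, 1 ≤ k → k ≤ n → y - S k ω ∈ Cpos) ∧
        y - S n ω ∈ Set.Icc (x - (δt - δ) • (1 : Fin d → ℝ)) x}
      ≤ P (F1 ⁻¹' E) := measure_mono hsub1
    _ = Measure.map F1 P E := (Measure.map_apply hF1m hEmeas).symm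
    _ = Measure.map F2 P E := by rw [hlaw]
    _ = P (F2 ⁻¹' E) := Measure.map_apply hF2m hEmeas
    _ ≤ _ := measure_mono hsub2
end
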